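/- arXiv:1304.4290 — 2 statements merged into one kernel-verified Lean document; each statement's English description precedes it below -/
import Mathlib

section
/- Let S be a numerical semigroup minimally generated by g_1 < ... < g_ν. If s ⪯ t in S and t has a unique representation as a nonnegative integer combination of the minimal generators, then s has a unique representation, and moreover ord(s) + ord(t - s) = ord(t), where ord denotes the maximal total coefficient sum over all representations. -/
/-- A numerical semigroup: a subset of ℕ containing 0, closed under addition,
with finite complement. -/
structure NumSgp where
  carrier : Set ℕ
  zero_mem : 0 ∈ carrier
  add_mem : ∀ a ∈ carrier, ∀ b ∈ carrier, a + b ∈ carrier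
  cofinite : Set.Finite carrierᶜ

namespace NumSgp

/-- The multiplicity: the smallest positive element. -/
noncomputable def mult (S : NumSgp) : ℕ := sInf {s | s ∈ S.carrier ∧ s ≠ 0}

/-- The Apéry set of `S` with respect to `n`: elements `s ∈ S` with `s - n ∉ S`. -/
def Apery (S : NumSgp) (n : ℕ) : Set ℕ :=
  {s | s ∈ S.carrier ∧ ¬ ∃ t ∈ S.carrier, s = t + n}

/-- `s ⪯ t` : there is `u ∈ S` with `t = s + u`. -/
def sle (S : NumSgp) (s t : ℕ) : Prop := ∃ u ∈ S.carrier, t = s + u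

/-- Membership for integers. -/
def memZ (S : NumSgp) (x : ℤ) : Prop := ∃ n ∈ S.carrier, (n : ℤ) = x

/-- `f` is the Frobenius number of `S`: the largest integer not in `S`. -/
def IsFrob (S : NumSgp) (f : ℤ) : Prop := ¬ S.memZ f ∧ ∀ x : ℤ, f < x → S.memZ x

/-- `S` is symmetric: `x ∈ S ↔ f - x ∉ S` for all integers `x`. -/
def Symm (S : NumSgp) : Prop :=
  ∃ f : ℤ, S.IsFrob f ∧ ∀ x : ℤ, S.memZ x ↔ ¬ S.memZ (f - x)

/-- `s` is a minimal generator (irreducible element) of `S`. -/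
def IsMinGen (S : NumSgp) (s : ℕ) : Prop :=
  s ∈ S.carrier ∧ s ≠ 0 ∧
    ¬ ∃ a ∈ S.carrier, ∃ b ∈ S.carrier, a ≠ 0 ∧ b ≠ 0 ∧ s = a + b

/-- `g : Fin ν → ℕ` enumerates the minimal generators in increasing order. -/
def MinGens (S : NumSgp) {ν : ℕ} (g : Fin ν → ℕ) : Prop :=
  StrictMono g ∧ Set.range g = {s | S.IsMinGen s}

/-- The order of `s`: the maximal total coefficient sum over representations of `s`
in terms of the generators `g`. -/
noncomputable def ord {ν : ℕ} (g : Fin ν → ℕ) (s : ℕ) : ℕ :=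
  sSup {k | ∃ lam : Fin ν → ℕ, s = ∑ i, lam i * g i ∧ k = ∑ i, lam i}

/-- `s` has a unique representation in terms of the generators `g`. -/
def UniqueRep {ν : ℕ} (g : Fin ν → ℕ) (s : ℕ) : Prop :=
  ∃! lam : Fin ν → ℕ, s = ∑ i, lam i * g i

/-- `s` has a unique maximal representation in terms of the generators `g`. -/
def UniqueMaxRep {ν : ℕ} (g : Fin ν → ℕ) (s : ℕ) : Prop :=
  ∃! lam : Fin ν → ℕ, s = ∑ i, lam i * g i ∧ ∑ i, lam i = ord g s

/-- The submonoid of ℕ generated by the generators `g j` with `j < i`. -/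
def genBy {ν : ℕ} (g : Fin ν → ℕ) (i : Fin ν) : Set ℕ :=
  {s | ∃ lam : Fin ν → ℕ, (∀ j, ¬ j < i → lam j = 0) ∧ s = ∑ j, lam j * g j}

/-- `τ_i = min {h | h·g_i ∈ ⟨g_1, …, g_{i-1}⟩} - 1`. -/
noncomputable def tau {ν : ℕ} (g : Fin ν → ℕ) (i : Fin ν) : ℕ :=
  sInf {h | h * g i ∈ genBy g i} - 1

/-- `α_i = max {h | h·g_i ∈ Ap(S, m)}`. -/
noncomputable def alpha (S : NumSgp) {ν : ℕ} (g : Fin ν → ℕ) (i : Fin ν) : ℕ :=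
  sSup {h | h * g i ∈ S.Apery S.mult}

/-- `β_i = max {h | h·g_i ∈ Ap(S, m) and ord(h·g_i) = h}`. -/
noncomputable def beta (S : NumSgp) {ν : ℕ} (g : Fin ν → ℕ) (i : Fin ν) : ℕ :=
  sSup {h | h * g i ∈ S.Apery S.mult ∧ ord g (h * g i) = h}

/-- `γ_i`. -/
noncomputable def gamma (S : NumSgp) {ν : ℕ} (g : Fin ν → ℕ) (i : Fin ν) : ℕ :=
  sSup {h | h * g i ∈ S.Apery S.mult ∧ ord g (h * g i) = h ∧ UniqueMaxRep g (h * g i)}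

/-- The "rectangle" `{Σ_{i ≥ 2} λ_i g_i | 0 ≤ λ_i ≤ c_i}` (indices here start at 0,
the first generator does not appear). -/
def rect {ν : ℕ} (g c : Fin ν → ℕ) : Set ℕ :=
  {s | ∃ lam : Fin ν → ℕ, (∀ i, i.val = 0 → lam i = 0) ∧ (∀ i, lam i ≤ c i) ∧
    s = ∑ i, lam i * g i}

/-- `Π_{i ≥ 2} (c_i + 1)` (the first index excluded). -/
def piProd {ν : ℕ} (c : Fin ν → ℕ) : ℕ :=
  ∏ i ∈ Finset.univ.filter (fun i : Fin ν => i.val ≠ 0), (c i + 1)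

/-- `S` is telescopic. -/
def Telescopic (S : NumSgp) : Prop :=
  ∃ (ν : ℕ) (g : Fin ν → ℕ), S.MinGens g ∧ S.Apery S.mult = rect g (tau g)

/-- `S` has α-rectangular Apéry set. -/
def AlphaRect (S : NumSgp) : Prop :=
  ∃ (ν : ℕ) (g : Fin ν → ℕ), S.MinGens g ∧ S.Apery S.mult = rect g (S.alpha g)

/-- `S` has γ-rectangular Apéry set. -/
def GammaRect (S : NumSgp) : Prop :=
  ∃ (ν : ℕ) (g : Fin ν → ℕ), S.MinGens g ∧ S.Apery S.mult = rect g (S.gamma g)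

/-- `S` is associated to a plane branch: telescopic and `(τ_i+1) g_i < g_{i+1}`. -/
def PlaneBranch (S : NumSgp) : Prop :=
  ∃ (ν : ℕ) (g : Fin ν → ℕ), S.MinGens g ∧ S.Apery S.mult = rect g (tau g) ∧
    ∀ i : Fin ν, 1 ≤ i.val → ∀ h : i.val + 1 < ν, (tau g i + 1) * g i < g ⟨i.val + 1, h⟩

/-- `S` is free: for some rearrangement `n` of the minimal generators,
`Ap(S, n_1) = {Σ_{i ≥ 2} λ_i n_i | 0 ≤ λ_i ≤ φ_i}`. -/
def Free (S : NumSgp) : Prop :=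
  ∃ (ν : ℕ) (hν : 0 < ν) (n : Fin ν → ℕ), Function.Injective n ∧
    Set.range n = {s | S.IsMinGen s} ∧ S.Apery (n ⟨0, hν⟩) = rect n (tau n)

/-- The kernel congruence of the factorization map `λ ↦ Σ λ_i g_i`. -/
def kerCon {ν : ℕ} (g : Fin ν → ℕ) : AddCon (Fin ν → ℕ) where
  r a b := ∑ i, a i * g i = ∑ i, b i * g i
  iseqv := ⟨fun _ => rfl, Eq.symm, Eq.trans⟩
  add' := by
    intro a b c d h1 h2
    simp only [Pi.add_apply, add_mul, Finset.sum_add_distrib]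
    exact congrArg₂ (· + ·) h1 h2

/-- `S` is a complete intersection: it admits a presentation of cardinality `ν - 1`
(the cardinality of any minimal presentation equals `ν - 1`). -/
def CompleteIntersection (S : NumSgp) : Prop :=
  ∃ (ν : ℕ) (g : Fin ν → ℕ), S.MinGens g ∧
    ∃ ρ : Finset ((Fin ν → ℕ) × (Fin ν → ℕ)), ρ.card = ν - 1 ∧
      addConGen (fun a b => (a, b) ∈ ρ) = kerCon g

end NumSgp

open NumSgp

namespace NumSgp

variable {ν : ℕ} {g : Fin ν → ℕ}

theorem sum_add_mul (a b : Fin ν → ℕ) :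
    ∑ i, (a + b) i * g i = ∑ i, a i * g i + ∑ i, b i * g i := by
  simp only [Pi.add_apply, add_mul, Finset.sum_add_distrib]

theorem exists_rep_of_mem {S : NumSgp} (hg : S.MinGens g) {s : ℕ} (hs : s ∈ S.carrier) :
    ∃ lam : Fin ν → ℕ, s = ∑ i, lam i * g i := by
  induction s using Nat.strong_induction_on with
  | _ s ih =>
  by_cases h0 : s = 0
  · exact ⟨0, by simp [h0]⟩
  by_cases hred : ∃ a ∈ S.carrier, ∃ b ∈ S.carrier, a ≠ 0 ∧ b ≠ 0 ∧ s = a + b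
  · obtain ⟨a, ha, b, hb, ha0, hb0, rfl⟩ := hred
    obtain ⟨la, rfl⟩ := ih a (by omega) ha
    obtain ⟨lb, rfl⟩ := ih b (by omega) hb
    exact ⟨la + lb, (sum_add_mul la lb).symm⟩
  · obtain ⟨i, rfl⟩ : s ∈ Set.range g := hg.2 ▸ ⟨hs, h0, hred⟩
    exact ⟨Pi.single i 1, by simp [Pi.single_apply]⟩

theorem UniqueRep.of_add_left {a b : ℕ} (h : UniqueRep g (a + b))
    (ha : ∃ la : Fin ν → ℕ, a = ∑ i, la i * g i) (hb : ∃ lb : Fin ν → ℕ, b = ∑ i, lb i * g i) :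
    UniqueRep g a := by
  obtain ⟨la, hla⟩ := ha
  obtain ⟨lb, hlb⟩ := hb
  refine ⟨la, hla, fun la' hla' => add_right_cancel (h.unique (y₁ := la' + lb) ?_ ?_)⟩
  · rw [sum_add_mul, ← hla', ← hlb]
  · rw [sum_add_mul, ← hla, ← hlb]

theorem UniqueRep.of_add_right {a b : ℕ} (h : UniqueRep g (a + b))
    (ha : ∃ la : Fin ν → ℕ, a = ∑ i, la i * g i) (hb : ∃ lb : Fin ν → ℕ, b = ∑ i, lb i * g i) :
    UniqueRep g b :=
  (add_comm a b ▸ h).of_add_left hb ha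

theorem UniqueRep.ord_eq {s : ℕ} (h : UniqueRep g s) {lam : Fin ν → ℕ}
    (hlam : s = ∑ i, lam i * g i) : ord g s = ∑ i, lam i := by
  have hsums : {k | ∃ lam' : Fin ν → ℕ, s = ∑ i, lam' i * g i ∧ k = ∑ i, lam' i}
      = {∑ i, lam i} := by
    ext k
    constructor
    · rintro ⟨lam', hlam', rfl⟩
      rw [h.unique hlam' hlam, Set.mem_singleton_iff]
    · rintro rfl
      exact ⟨lam, hlam, rfl⟩
  rw [ord, hsums, csSup_singleton]

theorem UniqueRep.ord_add {a b : ℕ} (h : UniqueRep g (a + b))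
    (ha : ∃ la : Fin ν → ℕ, a = ∑ i, la i * g i) (hb : ∃ lb : Fin ν → ℕ, b = ∑ i, lb i * g i) :
    ord g a + ord g b = ord g (a + b) := by
  obtain ⟨la, hla⟩ := ha
  obtain ⟨lb, hlb⟩ := hb
  have hlab : a + b = ∑ i, (la + lb) i * g i := by rw [sum_add_mul, ← hla, ← hlb]
  rw [(h.of_add_left ⟨la, hla⟩ ⟨lb, hlb⟩).ord_eq hla,
    (h.of_add_right ⟨la, hla⟩ ⟨lb, hlb⟩).ord_eq hlb, h.ord_eq hlab]
  simp only [Pi.add_apply, Finset.sum_add_distrib]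

end NumSgp

theorem stmt_1_general (S : NumSgp) (ν : ℕ) (g : Fin ν → ℕ) (hg : S.MinGens g)
    (s t : ℕ) (hs : s ∈ S.carrier) (hst : S.sle s t)
    (huniq : UniqueRep g t) :
    UniqueRep g s ∧ ord g s + ord g (t - s) = ord g t := by
  obtain ⟨u, hu, rfl⟩ := hst
  have hrep_s := exists_rep_of_mem hg hs
  have hrep_u := exists_rep_of_mem hg hu
  rw [Nat.add_sub_cancel_left]
  exact ⟨huniq.of_add_left hrep_s hrep_u, huniq.ord_add hrep_s hrep_u⟩

/-- If `s ⪯ t` and `t` has a unique representation, then so does `s`,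
and `ord(s) + ord(t - s) = ord(t)`. -/
theorem stmt_1 (S : NumSgp) (ν : ℕ) (g : Fin ν → ℕ) (hg : S.MinGens g)
    (s t : ℕ) (hs : s ∈ S.carrier) (ht : t ∈ S.carrier) (hst : S.sle s t)
    (huniq : UniqueRep g t) :
    UniqueRep g s ∧ ord g s + ord g (t - s) = ord g t :=
  stmt_1_general S ν g hg s t hs hst huniq
end

section
/- Let S be a numerical semigroup with multiplicity m, minimally generated by g_1 < ... < g_ν, and for i ≥ 2 let α_i = max{h ∈ ℕ | h·g_i ∈ Ap(S,m)}. Then the Apéry set Ap(S,m) is contained in the set {Σ_{i=2}^{ν} λ_i g_i | 0 ≤ λ_i ≤ α_i}, and consequently m ≤ Π_{i=2}^{ν}(α_i + 1). -/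
/-! If `s = Σ λ_i g_i` lies in `Ap(S, m)` then so does every summand `λ_i g_i`. Hence the
coefficient of `g_1 = m` vanishes and `λ_i ≤ α_i`. For the bound, `Ap(S, m)` meets every residue
class mod `m`, and the rectangle is the image of a box with `Π_{i≥2} (α_i + 1)` points. -/

namespace NumSgp

variable (S : NumSgp)

theorem exists_mem_ne_zero : ∃ s ∈ S.carrier, s ≠ 0 := by
  have hinf : S.carrier.Infinite := by simpa using S.cofinite.infinite_compl
  obtain ⟨s, hs, hs0⟩ := (hinf.sdiff (Set.finite_singleton 0)).nonempty
  exact ⟨s, hs, hs0⟩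

theorem mult_mem : S.mult ∈ S.carrier :=
  (Nat.sInf_mem S.exists_mem_ne_zero).1

theorem mult_ne_zero : S.mult ≠ 0 :=
  (Nat.sInf_mem S.exists_mem_ne_zero).2

theorem mult_le {s : ℕ} (hs : s ∈ S.carrier) (h0 : s ≠ 0) : S.mult ≤ s :=
  Nat.sInf_le ⟨hs, h0⟩

theorem mul_mem (k : ℕ) {x : ℕ} (hx : x ∈ S.carrier) : k * x ∈ S.carrier := by
  induction k with
  | zero => simpa using S.zero_mem
  | succ k ih => rw [Nat.succ_mul]; exact S.add_mem _ ih _ hx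

theorem sum_mem {ι : Type*} (t : Finset ι) {f : ι → ℕ} (hf : ∀ i ∈ t, f i ∈ S.carrier) :
    ∑ i ∈ t, f i ∈ S.carrier := by
  classical
  induction t using Finset.induction with
  | empty => simpa using S.zero_mem
  | insert a t hat ih =>
    rw [Finset.sum_insert hat]
    exact S.add_mem _ (hf a (t.mem_insert_self a)) _ (ih fun i hi => hf i (t.mem_insert_of_mem hi))

theorem exists_forall_lt_mem : ∃ F : ℕ, ∀ n, F < n → n ∈ S.carrier := by
  obtain ⟨F, hF⟩ := S.cofinite.bddAbove
  exact ⟨F, fun n hn => by_contra fun h => absurd (hF h) (by omega)⟩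

theorem mult_isMinGen : S.IsMinGen S.mult := by
  refine ⟨S.mult_mem, S.mult_ne_zero, ?_⟩
  rintro ⟨a, ha, b, hb, ha0, hb0, hab⟩
  have := S.mult_le ha ha0
  have := S.mult_le hb hb0
  omega

section Apery

variable {S} {n : ℕ}

theorem mem_Apery_of_add_mem_Apery {a b : ℕ} (ha : a ∈ S.carrier) (hb : b ∈ S.carrier)
    (hab : a + b ∈ S.Apery n) : a ∈ S.Apery n := by
  refine ⟨ha, ?_⟩
  rintro ⟨t, ht, rfl⟩
  exact hab.2 ⟨t + b, S.add_mem _ ht _ hb, by omega⟩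

theorem eq_zero_of_mul_mem_Apery {k : ℕ} (hn : n ∈ S.carrier) (hk : k * n ∈ S.Apery n) :
    k = 0 := by
  by_contra hk0
  obtain ⟨j, rfl⟩ := Nat.exists_eq_succ_of_ne_zero hk0
  exact hk.2 ⟨j * n, S.mul_mem j hn, Nat.succ_mul j n⟩

variable (S n)

theorem Apery_finite : (S.Apery n).Finite := by
  obtain ⟨F, hF⟩ := S.exists_forall_lt_mem
  refine (Set.finite_Iic (F + n)).subset fun s hs => ?_
  by_contra h
  exact hs.2 ⟨s - n, hF _ (by simp at h; omega), by simp at h; omega⟩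

theorem bddAbove_setOf_mul_mem_Apery {x : ℕ} (hx : 0 < x) :
    BddAbove {k | k * x ∈ S.Apery n} :=
  ((S.Apery_finite n).preimage fun _ _ _ _ h => Nat.eq_of_mul_eq_mul_right hx h).bddAbove

/-- For each residue `r` mod `n`, the least element of `S` congruent to `r` lies in `Ap(S, n)`. -/
theorem le_ncard_Apery : n ≤ (S.Apery n).ncard := by
  obtain ⟨F, hF⟩ := S.exists_forall_lt_mem
  have hres : (Finset.range n : Set ℕ) ⊆ (· % n) '' S.Apery n := by
    intro r hr
    have hrn : r < n := by simpa using hr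
    have hne : {s | s ∈ S.carrier ∧ s % n = r}.Nonempty :=
      ⟨r + n * (F + 1), hF _ (by nlinarith), by simp [Nat.mod_eq_of_lt hrn]⟩
    obtain ⟨hw, hwr⟩ := Nat.sInf_mem hne
    refine ⟨_, ⟨hw, ?_⟩, hwr⟩
    rintro ⟨t, ht, hwt⟩
    have : sInf {s | s ∈ S.carrier ∧ s % n = r} ≤ t :=
      Nat.sInf_le (m := t) ⟨ht, by rwa [hwt, Nat.add_mod_right] at hwr⟩
    omega
  calc n = (Finset.range n : Set ℕ).ncard := by simp
    _ ≤ ((· % n) '' S.Apery n).ncard := Set.ncard_le_ncard hres ((S.Apery_finite n).image _)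
    _ ≤ (S.Apery n).ncard := Set.ncard_image_le (S.Apery_finite n)

end Apery

section MinGens

variable {S} {ν : ℕ} {g : Fin ν → ℕ}

theorem MinGens.isMinGen (hg : S.MinGens g) (i : Fin ν) : S.IsMinGen (g i) :=
  hg.2.subset (Set.mem_range_self i)

theorem MinGens.mem (hg : S.MinGens g) (i : Fin ν) : g i ∈ S.carrier :=
  (hg.isMinGen i).1

theorem MinGens.pos (hg : S.MinGens g) (i : Fin ν) : 0 < g i :=
  Nat.pos_of_ne_zero (hg.isMinGen i).2.1

theorem MinGens.apply_eq_mult (hg : S.MinGens g) {i : Fin ν} (hi : i.val = 0) :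
    g i = S.mult := by
  obtain ⟨j, hj⟩ : S.mult ∈ Set.range g := hg.2.symm.subset S.mult_isMinGen
  have hij : g i ≤ g j := hg.1.monotone (Fin.le_def.2 (by omega))
  have := S.mult_le (hg.mem i) (hg.isMinGen i).2.1
  omega

theorem MinGens.exists_eq_sum (hg : S.MinGens g) {s : ℕ} (hs : s ∈ S.carrier) :
    ∃ lam : Fin ν → ℕ, s = ∑ i, lam i * g i := by
  induction s using Nat.strong_induction_on with
  | _ s ih =>
  rcases eq_or_ne s 0 with rfl | hs0
  · exact ⟨0, by simp⟩
  by_cases hmin : S.IsMinGen s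
  · obtain ⟨j, rfl⟩ : s ∈ Set.range g := hg.2.symm.subset hmin
    exact ⟨Pi.single j 1, by simp [Pi.single_apply]⟩
  · obtain ⟨a, ha, b, hb, ha0, hb0, rfl⟩ : ∃ a ∈ S.carrier, ∃ b ∈ S.carrier,
        a ≠ 0 ∧ b ≠ 0 ∧ s = a + b := by
      by_contra h
      exact hmin ⟨hs, hs0, h⟩
    obtain ⟨la, rfl⟩ := ih a (by omega) ha
    obtain ⟨lb, rfl⟩ := ih b (by omega) hb
    exact ⟨la + lb, by simp only [Pi.add_apply, add_mul, Finset.sum_add_distrib]⟩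

theorem mul_mem_Apery_of_sum_mem_Apery (hg : ∀ i, g i ∈ S.carrier) {n : ℕ}
    {lam : Fin ν → ℕ} (h : ∑ j, lam j * g j ∈ S.Apery n) (i : Fin ν) :
    lam i * g i ∈ S.Apery n := by
  rw [← Finset.add_sum_erase _ _ (Finset.mem_univ i)] at h
  exact mem_Apery_of_add_mem_Apery (S.mul_mem _ (hg i))
    (S.sum_mem _ fun j _ => S.mul_mem _ (hg j)) h

theorem MinGens.Apery_mult_subset_rect (hg : S.MinGens g) :
    S.Apery S.mult ⊆ rect g (S.alpha g) := by
  intro s hs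
  obtain ⟨lam, rfl⟩ := hg.exists_eq_sum hs.1
  have hAp := mul_mem_Apery_of_sum_mem_Apery hg.mem hs
  refine ⟨lam, fun i hi => ?_, fun i => ?_, rfl⟩
  · exact eq_zero_of_mul_mem_Apery S.mult_mem (hg.apply_eq_mult hi ▸ hAp i)
  · exact le_csSup (S.bddAbove_setOf_mul_mem_Apery _ (hg.pos i)) (hAp i)

end MinGens

section Rect

variable {ν : ℕ}

def rectBox (c : Fin ν → ℕ) : Finset (Fin ν → ℕ) :=
  Fintype.piFinset fun i => if i.val = 0 then {0} else Finset.range (c i + 1)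

theorem card_rectBox (c : Fin ν → ℕ) : (rectBox c).card = piProd c := by
  rw [rectBox, Fintype.card_piFinset, piProd, Finset.prod_filter]
  refine Finset.prod_congr rfl fun i _ => ?_
  split_ifs <;> simp_all

theorem rect_eq_image (g c : Fin ν → ℕ) :
    rect g c = (fun lam => ∑ i, lam i * g i) '' (rectBox c : Set (Fin ν → ℕ)) := by
  ext s
  simp only [rect, rectBox, Set.mem_image, Finset.mem_coe,
    Fintype.mem_piFinset]
  refine exists_congr fun lam => ⟨fun ⟨h0, hc, hs⟩ => ⟨fun i => ?_, hs.symm⟩,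
    fun ⟨hbox, hs⟩ => ⟨fun i hi => ?_, fun i => ?_, hs.symm⟩⟩
  · split_ifs with hi
    · simpa using h0 i hi
    · simpa [Nat.lt_succ_iff] using hc i
  · simpa [hi] using hbox i
  · have := hbox i
    split_ifs at this <;> simp_all

theorem rect_finite (g c : Fin ν → ℕ) : (rect g c).Finite :=
  rect_eq_image g c ▸ (rectBox c).finite_toSet.image _

theorem ncard_rect_le (g c : Fin ν → ℕ) : (rect g c).ncard ≤ piProd c := by
  rw [rect_eq_image, ← card_rectBox, ← Set.ncard_coe_finset]
  exact Set.ncard_image_le (rectBox c).finite_toSet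

end Rect

end NumSgp

open NumSgp

/-- `Ap(S, m) ⊆ {Σ_{i≥2} λ_i g_i | 0 ≤ λ_i ≤ α_i}` and `m ≤ Π_{i≥2}(α_i + 1)`. -/
theorem stmt_2 (S : NumSgp) (ν : ℕ) (g : Fin ν → ℕ) (hg : S.MinGens g) :
    S.Apery S.mult ⊆ rect g (S.alpha g) ∧ S.mult ≤ piProd (S.alpha g) := by
  have hsub := hg.Apery_mult_subset_rect
  refine ⟨hsub, ?_⟩
  calc S.mult ≤ (S.Apery S.mult).ncard := S.le_ncard_Apery S.mult
    _ ≤ (rect g (S.alpha g)).ncard := Set.ncard_le_ncard hsub (rect_finite _ _)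
    _ ≤ piProd (S.alpha g) := ncard_rect_le _ _
end
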